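/- arXiv:1809.10593 — 3 statements merged into one kernel-verified Lean document; each statement's English description precedes it below -/
import Mathlib

section
/- Let q > 1 and α, β ∈ ℂ with αβ = 1, |α| = |β| = 1. Define W(r) = q^{-r/2} ∑_{r₁+r₂=r} α^{r₁}β^{r₂} for r ≥ 0 and W*(r) = q^{-(r-1)/2} ∑_{r₁+r₂=r-1} α^{r₁}β^{r₂} for r ≥ 1, W*(r) = 0 otherwise. Then ζ(2) · [∑_{r≥0} W(r) conj(W*(r))] / [ζ(1) · L(Ad, 1)] = ζ(2)/ζ(1) · (α + β)/q^{1/2}, where ζ(s) = (1 - q^{-s})^{-1} and L(Ad, 1) = ((1 - α²q^{-1})(1 - q^{-1})(1 - β²q^{-1}))^{-1}. -/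
open ComplexConjugate

set_option maxHeartbeats 1000000

/-- Normalized inner product of the unramified new vector with its translate:
for `q > 1`, `αβ = 1`, `|α| = |β| = 1`, with `W(r) = q^{-r/2} ∑_{i+j=r} αⁱβʲ` and
`W*(0) = 0`, `W*(r) = q^{-(r-1)/2} ∑_{i+j=r-1} αⁱβʲ` for `r ≥ 1`, one has
`ζ(2)·(∑_{r≥0} W(r)·conj(W*(r)))/(ζ(1)·L(Ad,1)) = (ζ(2)/ζ(1))·(α+β)/q^{1/2}`,
where `ζ(s) = (1-q^{-s})⁻¹` and `L(Ad,1) = ((1-α²q⁻¹)(1-q⁻¹)(1-β²q⁻¹))⁻¹`. -/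
theorem stmt_4 (q : ℝ) (hq : 1 < q) (α β : ℂ) (hαβ : α * β = 1)
    (hα : ‖α‖ = 1) (hβ : ‖β‖ = 1)
    (W Ws : ℕ → ℂ)
    (hW : ∀ r : ℕ, W r =
      ((Real.sqrt q : ℂ) ^ r)⁻¹ * ∑ i ∈ Finset.range (r + 1), α ^ i * β ^ (r - i))
    (hWs0 : Ws 0 = 0)
    (hWs : ∀ r : ℕ, Ws (r + 1) =
      ((Real.sqrt q : ℂ) ^ r)⁻¹ * ∑ i ∈ Finset.range (r + 1), α ^ i * β ^ (r - i)) :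
    (1 - ((q : ℂ) ^ 2)⁻¹)⁻¹ * (∑' r : ℕ, W r * conj (Ws r))
        / ((1 - (q : ℂ)⁻¹)⁻¹
            * ((1 - α ^ 2 * (q : ℂ)⁻¹) * (1 - (q : ℂ)⁻¹) * (1 - β ^ 2 * (q : ℂ)⁻¹))⁻¹)
      = (1 - ((q : ℂ) ^ 2)⁻¹)⁻¹ / (1 - (q : ℂ)⁻¹)⁻¹ * (α + β) / (Real.sqrt q : ℂ) := by
  have hq0 : (0:ℝ) < q := lt_trans one_pos hq
  set s : ℂ := (Real.sqrt q : ℂ) with hs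
  have hs2 : s ^ 2 = (q : ℂ) := by
    rw [hs]; norm_cast; rw [Real.sq_sqrt hq0.le]
  have hsne : s ≠ 0 := by
    rw [hs]; exact_mod_cast (Real.sqrt_pos.mpr hq0).ne'
  set x : ℂ := (q:ℂ)⁻¹ with hx
  have hnx : ‖x‖ < 1 := by
    rw [hx, norm_inv, Complex.norm_real, Real.norm_eq_abs, abs_of_pos hq0]
    exact inv_lt_one_of_one_lt₀ hq
  have hnα : ‖α‖ = 1 := hα
  have hnβ : ‖β‖ = 1 := hβ
  have hnax : ‖α^2 * x‖ < 1 := by rw [norm_mul, norm_pow, hnα]; simpa using hnx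
  have hnbx : ‖β^2 * x‖ < 1 := by rw [norm_mul, norm_pow, hnβ]; simpa using hnx
  have key : ∀ t : ℂ, ‖t‖ < 1 → 1 - t ≠ 0 := by
    intro t ht h
    rw [sub_eq_zero] at h
    rw [← h] at ht; simp at ht
  have h1x : (1 : ℂ) - x ≠ 0 := key x hnx
  have h1a : (1 : ℂ) - α^2 * x ≠ 0 := key _ hnax
  have h1b : (1 : ℂ) - β^2 * x ≠ 0 := key _ hnbx
  have h1x2 : (1 : ℂ) - ((q:ℂ)^2)⁻¹ ≠ 0 := by
    have : ((q:ℂ)^2)⁻¹ = x^2 := by rw [hx, inv_pow]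
    rw [this]
    refine key _ ?_
    rw [norm_pow]
    exact pow_lt_one₀ (norm_nonneg _) hnx (by norm_num)
  -- conjugates
  have hconjα : conj α = β := by
    have h1 : conj α * α = 1 := by
      rw [mul_comm, Complex.mul_conj]
      norm_cast
      rw [Complex.normSq_eq_norm_sq, hα]; norm_num
    calc conj α = conj α * (α * β) := by rw [hαβ, mul_one]
      _ = (conj α * α) * β := by ring
      _ = β := by rw [h1, one_mul]
  have hconjβ : conj β = α := by
    have := congrArg conj hconjα
    simpa using this.symm
  set c : ℕ → ℂ := fun r => ∑ i ∈ Finset.range (r + 1), α ^ i * β ^ (r - i) with hc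
  have hconjc : ∀ r, conj (c r) = c r := by
    intro r
    rw [hc]
    simp only [map_sum, map_mul, map_pow, hconjα, hconjβ]
    rw [← Finset.sum_range_reflect (fun i => β ^ i * α ^ (r - i)) (r+1)]
    apply Finset.sum_congr rfl
    intro i hi
    simp only [Finset.mem_range] at hi
    have h1 : r + 1 - 1 - i = r - i := by omega
    have h2 : r - (r - i) = i := by omega
    rw [h1, h2, mul_comm]
  -- per-term formula
  have hterm : ∀ r : ℕ, W (r+1) * conj (Ws (r+1)) = s⁻¹ * (x ^ r * (c r * c (r+1))) := by
    intro r
    rw [hW (r+1), hWs r]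
    rw [map_mul, map_inv₀, map_pow, Complex.conj_ofReal]
    rw [show (∑ i ∈ Finset.range (r + 1 + 1), α ^ i * β ^ (r + 1 - i)) = c (r+1) from rfl]
    rw [show conj (∑ i ∈ Finset.range (r + 1), α ^ i * β ^ (r - i)) = c r from hconjc r]
    have hpow : (s ^ (r+1))⁻¹ * (s ^ r)⁻¹ = s⁻¹ * x ^ r := by
      rw [← mul_inv, ← pow_add, show r + 1 + r = 1 + 2*r by omega, pow_add, pow_mul, hs2,
        pow_one, mul_inv, hx, inv_pow]
    calc (s ^ (r+1))⁻¹ * c (r+1) * ((s ^ r)⁻¹ * c r)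
        = ((s ^ (r+1))⁻¹ * (s ^ r)⁻¹) * (c (r+1) * c r) := by ring
      _ = s⁻¹ * (x ^ r * (c r * c (r+1))) := by rw [hpow]; ring
  -- main HasSum
  have hmain : HasSum (fun r : ℕ => x ^ r * (c r * c (r+1)))
      ((α+β) * ((1 - α^2*x) * (1 - x) * (1 - β^2*x))⁻¹) := by
    rcases eq_or_ne α β with hab | hab
    · -- α = β, α² = 1
      have hα2 : α ^ 2 = 1 := by rw [sq, ← hαβ, ← hab]
      have hβ2 : β ^ 2 = 1 := by rw [← hab]; exact hα2
      have hcr : ∀ r, c r = (r + 1 : ℂ) * α ^ r := by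
        intro r
        have hco : ∀ i ∈ Finset.range (r+1), α ^ i * β ^ (r - i) = α ^ r := by
          intro i hi; simp only [Finset.mem_range] at hi
          rw [← hab, ← pow_add, show i + (r - i) = r by omega]
        rw [hc]
        simp only
        rw [Finset.sum_congr rfl hco, Finset.sum_const, Finset.card_range]
        push_cast; ring
      have hterm2 : ∀ r : ℕ, x ^ r * (c r * c (r+1)) = (2*α) * (((r+2).choose 2 : ℂ) * x ^ r) := by
        intro r
        rw [hcr r, hcr (r+1)]
        have : α ^ r * α ^ (r+1) = α := by
          rw [← pow_add, show r + (r+1) = 2*r + 1 by omega, pow_add, pow_mul, hα2, one_pow,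
            pow_one, one_mul]
        rw [Nat.cast_choose_two]
        push_cast
        calc x ^ r * (((r:ℂ) + 1) * α ^ r * (((r:ℂ) + 1 + 1) * α ^ (r + 1)))
            = ((r:ℂ)+1) * ((r:ℂ)+2) * (α ^ r * α ^ (r+1)) * x ^ r := by ring
          _ = 2*α * (((r:ℂ)+2) * (((r:ℂ)+2) - 1) / 2 * x ^ r) := by rw [this]; ring
      have hsum := (hasSum_choose_mul_geometric_of_norm_lt_one 2 hnx).mul_left (2*α)
      have heq : (fun r : ℕ => x ^ r * (c r * c (r+1)))
          = fun r : ℕ => (2*α) * (((r+2).choose 2 : ℂ) * x ^ r) := funext hterm2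
      rw [heq]
      convert hsum using 1
      · rfl
      rw [hα2, hβ2, ← hab]
      field_simp
      ring
    · -- α ≠ β
      have hane : α - β ≠ 0 := sub_ne_zero.mpr hab
      have hcr : ∀ r, c r * (α - β) = α^(r+1) - β^(r+1) := by
        intro r
        have := geom_sum₂_mul α β (r+1)
        simpa using this
      have habn : ∀ n : ℕ, α ^ n * β ^ n = 1 := by
        intro n; rw [← mul_pow, hαβ, one_pow]
      have hterm2 : ∀ r : ℕ, (x ^ r * (c r * c (r+1))) * ((α-β)*(α-β))
          = α^3 * (α^2*x)^r + β^3 * (β^2*x)^r - (α+β) * x^r := by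
        intro r
        have e : (x ^ r * (c r * c (r+1))) * ((α-β)*(α-β))
            = x ^ r * ((c r * (α-β)) * (c (r+1) * (α-β))) := by ring
        rw [e, hcr r, hcr (r+1)]
        have e1 : α^(r+1) * α^(r+1+1) = α^3 * (α^2)^r := by
          rw [← pow_add, ← pow_mul, ← pow_add]; congr 1; omega
        have e2 : β^(r+1) * β^(r+1+1) = β^3 * (β^2)^r := by
          rw [← pow_add, ← pow_mul, ← pow_add]; congr 1; omega
        have e3 : α^(r+1) * β^(r+1+1) = β := by
          calc α^(r+1) * β^(r+1+1) = (α^(r+1) * β^(r+1)) * β := by rw [pow_succ]; ring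
            _ = β := by rw [habn (r+1), one_mul]
        have e4 : α^(r+1+1) * β^(r+1) = α := by
          calc α^(r+1+1) * β^(r+1) = (α^(r+1) * β^(r+1)) * α := by rw [pow_succ]; ring
            _ = α := by rw [habn (r+1), one_mul]
        calc x ^ r * ((α^(r+1) - β^(r+1)) * (α^(r+1+1) - β^(r+1+1)))
            = x ^ r * (α^(r+1)*α^(r+1+1) + β^(r+1)*β^(r+1+1)
                - α^(r+1)*β^(r+1+1) - α^(r+1+1)*β^(r+1)) := by ring
          _ = x ^ r * (α^3 * (α^2)^r + β^3 * (β^2)^r - β - α) := by rw [e1, e2, e3, e4]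
          _ = α^3 * ((α^2)^r * x^r) + β^3 * ((β^2)^r * x^r) - (α+β) * x^r := by ring
          _ = α^3 * (α^2*x)^r + β^3 * (β^2*x)^r - (α+β) * x^r := by rw [← mul_pow, ← mul_pow]
      have hS : HasSum (fun r : ℕ => α^3 * (α^2*x)^r + β^3 * (β^2*x)^r - (α+β) * x^r)
          (α^3 * (1 - α^2*x)⁻¹ + β^3 * (1 - β^2*x)⁻¹ - (α+β) * (1-x)⁻¹) :=
        (((hasSum_geometric_of_norm_lt_one hnax).mul_left (α^3)).add
          ((hasSum_geometric_of_norm_lt_one hnbx).mul_left (β^3))).sub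
          ((hasSum_geometric_of_norm_lt_one hnx).mul_left (α+β))
      have hS2 : HasSum (fun r : ℕ => (x ^ r * (c r * c (r+1))) * ((α-β)*(α-β)))
          (α^3 * (1 - α^2*x)⁻¹ + β^3 * (1 - β^2*x)⁻¹ - (α+β) * (1-x)⁻¹) := by
        rw [funext hterm2]; exact hS
      have hS3 := hS2.mul_right ((α-β)*(α-β))⁻¹
      have hne2 : (α-β)*(α-β) ≠ 0 := mul_ne_zero hane hane
      have heq2 : (fun r : ℕ => (x ^ r * (c r * c (r+1))) * ((α-β)*(α-β)) * ((α-β)*(α-β))⁻¹)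
          = fun r : ℕ => x ^ r * (c r * c (r+1)) := by
        funext r; field_simp
      rw [heq2] at hS3
      convert hS3 using 1
      · rfl
      field_simp
      linear_combination (((-1*β) + (β*(q:ℂ)⁻¹) + (β^3*(q:ℂ)⁻¹) + (-1*β^3*((q:ℂ)⁻¹)^2) + (-1*α) + (α*(q:ℂ)⁻¹) + (2*α*β^2*(q:ℂ)⁻¹) + (-2*α*β^2*((q:ℂ)⁻¹)^2) + (-1*α*β^4*((q:ℂ)⁻¹)^2) + (α*β^4*((q:ℂ)⁻¹)^3) + (2*α^2*β*(q:ℂ)⁻¹) + (-2*α^2*β*((q:ℂ)⁻¹)^2) + (-2*α^2*β^3*((q:ℂ)⁻¹)^2) + (2*α^2*β^3*((q:ℂ)⁻¹)^3) + (α^3*(q:ℂ)⁻¹) + (-1*α^3*((q:ℂ)⁻¹)^2) + (-2*α^3*β^2*((q:ℂ)⁻¹)^2) + (2*α^3*β^2*((q:ℂ)⁻¹)^3) + (α^3*β^4*((q:ℂ)⁻¹)^3) + (-1*α^3*β^4*((q:ℂ)⁻¹)^4) + (-1*α^4*β*((q:ℂ)⁻¹)^2) + (α^4*β*((q:ℂ)⁻¹)^3)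 + (α^4*β^3*((q:ℂ)⁻¹)^3) + (-1*α^4*β^3*((q:ℂ)⁻¹)^4)) + ((1*α^4*β^3*((q:ℂ)⁻¹)^4) + (-1*α^4*β^3*((q:ℂ)⁻¹)^3) + (-1*α^4*β^1*((q:ℂ)⁻¹)^3) + (1*α^4*β^1*((q:ℂ)⁻¹)^2) + (1*α^3*β^4*((q:ℂ)⁻¹)^4) + (-1*α^3*β^4*((q:ℂ)⁻¹)^3) + (-2*α^3*β^2*((q:ℂ)⁻¹)^3) + (2*α^3*β^2*((q:ℂ)⁻¹)^2) + (1*α^3*((q:ℂ)⁻¹)^2) + (-1*α^3*((q:ℂ)⁻¹)^1) + (-2*α^2*β^3*((q:ℂ)⁻¹)^3) + (2*α^2*β^3*((q:ℂ)⁻¹)^2) + (2*α^2*β^1*((q:ℂ)⁻¹)^2) + (-1*α^2*β^1*((q:ℂ)⁻¹)^1) + (-1*α^1*β^4*((q:ℂ)⁻¹)^3) + (1*α^1*β^4*((q:ℂ)⁻¹)^2) + (2*α^1*β^2*((q:ℂ)⁻¹)^2) + (-1*α^1*β^2*((q:ℂ)⁻¹)^1) + (-1*α^1*((q:ℂ)⁻¹)^1)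 + (1*β^3*((q:ℂ)⁻¹)^2) + (-1*β^3*((q:ℂ)⁻¹)^1) + (-1*β^1*((q:ℂ)⁻¹)^1))) * hαβ
  -- assemble the full sum
  have hfull : HasSum (fun r : ℕ => W r * conj (Ws r))
      (s⁻¹ * ((α+β) * ((1 - α^2*x) * (1 - x) * (1 - β^2*x))⁻¹)) := by
    have h1 : HasSum (fun n : ℕ => W (n+1) * conj (Ws (n+1)))
        (s⁻¹ * ((α+β) * ((1 - α^2*x) * (1 - x) * (1 - β^2*x))⁻¹)) := by
      rw [funext hterm]; exact hmain.mul_left s⁻¹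
    have h2 := (hasSum_nat_add_iff (f := fun r => W r * conj (Ws r)) 1).mp h1
    simpa [hWs0] using h2
  rw [hfull.tsum_eq]
  have hD : ((1 : ℂ) - α ^ 2 * x) * (1 - x) * (1 - β ^ 2 * x) ≠ 0 :=
    mul_ne_zero (mul_ne_zero h1a h1x) h1b
  have hgen : ∀ (u v w z2 : ℂ), u ≠ 0 → v ≠ 0 → w ≠ 0 →
      z2 * (w⁻¹ * ((α+β) * u⁻¹)) / (v⁻¹ * u⁻¹) = z2 / v⁻¹ * (α+β) / w := by
    intro u v w z2 hu hv hw
    field_simp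
  exact hgen _ _ _ _ hD h1x hsne
end

section
/- Let G be a group, H ≤ G a subgroup, and ℓ : V₁ × V₂ × V₃ → ℂ a trilinear map invariant under a G-action on V₁ ⊗ V₂ ⊗ V₃ (i.e., ℓ(g·v₁, g·v₂, g·v₃) = ℓ(v₁, v₂, v₃) for all g). Suppose φ ∈ V₁ satisfies w·a·φ = η·φ for a scalar η ∈ {±1} and specific group elements, φ₁ is fixed by a compact subgroup K containing w, and denote by φᵃ the translate a·φ. Then ℓ(φ, φ₁, φ₂ᵃ) = η · ℓ(φ, φ₁ᵃ, φ₂), where a = diag(ϖ, 1), w is the Weyl element, provided φ₁ is w-invariant and all vectors are invariant under scalars (center). -/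
/-- Atkin–Lehner relation for an invariant trilinear functional (local setting):
`G = GL₂(k)` (invertible 2×2 matrices), `w = [[0,1],[-1,0]]`, `a = diag(ϖ,1)`,
`d = diag(1,ϖ)`; the representations have trivial central character (scalar
matrices act trivially); `φ` satisfies `(w·a)·φ = η·φ` with `η = ±1`; `φ₁, φ₂`
are `w`-invariant.  Then `ℓ(φ, φ₁, d·φ₂) = η·ℓ(φ, d·φ₁, φ₂)`. -/
theorem stmt_6 {k : Type*} [Field k]
    {V₁ V₂ V₃ : Type*} [AddCommGroup V₁] [Module ℂ V₁]
    [AddCommGroup V₂] [Module ℂ V₂] [AddCommGroup V₃] [Module ℂ V₃]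
    (ρ₁ : Representation ℂ (Matrix (Fin 2) (Fin 2) k)ˣ V₁)
    (ρ₂ : Representation ℂ (Matrix (Fin 2) (Fin 2) k)ˣ V₂)
    (ρ₃ : Representation ℂ (Matrix (Fin 2) (Fin 2) k)ˣ V₃)
    (ℓ : V₁ →ₗ[ℂ] V₂ →ₗ[ℂ] V₃ →ₗ[ℂ] ℂ)
    (hinv : ∀ (g : (Matrix (Fin 2) (Fin 2) k)ˣ) (v₁ : V₁) (v₂ : V₂) (v₃ : V₃),
      ℓ (ρ₁ g v₁) (ρ₂ g v₂) (ρ₃ g v₃) = ℓ v₁ v₂ v₃)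
    (hcen₁ : ∀ (u : (Matrix (Fin 2) (Fin 2) k)ˣ) (c : k),
      (u : Matrix (Fin 2) (Fin 2) k) = c • (1 : Matrix (Fin 2) (Fin 2) k) →
      ∀ v : V₁, ρ₁ u v = v)
    (hcen₂ : ∀ (u : (Matrix (Fin 2) (Fin 2) k)ˣ) (c : k),
      (u : Matrix (Fin 2) (Fin 2) k) = c • (1 : Matrix (Fin 2) (Fin 2) k) →
      ∀ v : V₂, ρ₂ u v = v)
    (hcen₃ : ∀ (u : (Matrix (Fin 2) (Fin 2) k)ˣ) (c : k),
      (u : Matrix (Fin 2) (Fin 2) k) = c • (1 : Matrix (Fin 2) (Fin 2) k) →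
      ∀ v : V₃, ρ₃ u v = v)
    (ϖ : kˣ) (w a d : (Matrix (Fin 2) (Fin 2) k)ˣ)
    (hw : (w : Matrix (Fin 2) (Fin 2) k) = !![0, 1; -1, 0])
    (ha : (a : Matrix (Fin 2) (Fin 2) k) = !![(ϖ : k), 0; 0, 1])
    (hd : (d : Matrix (Fin 2) (Fin 2) k) = !![1, 0; 0, (ϖ : k)])
    (η : ℂ) (hη : η = 1 ∨ η = -1)
    (φ : V₁) (φ₁ : V₂) (φ₂ : V₃)
    (hAL : ρ₁ (w * a) φ = η • φ)
    (hφ₁ : ρ₂ w φ₁ = φ₁) (hφ₂ : ρ₃ w φ₂ = φ₂) :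
    ℓ φ φ₁ (ρ₃ d φ₂) = η * ℓ φ (ρ₂ d φ₁) φ₂ := by
  -- key matrix identities
  have hwa_dw : w * a = d * w := by
    ext : 1
    simp only [Units.val_mul, hw, ha, hd]
    rw [Matrix.mul_fin_two, Matrix.mul_fin_two]
    norm_num
  have had : ((a * d : (Matrix (Fin 2) (Fin 2) k)ˣ) : Matrix (Fin 2) (Fin 2) k)
      = (ϖ : k) • (1 : Matrix (Fin 2) (Fin 2) k) := by
    simp only [Units.val_mul, ha, hd]
    rw [Matrix.mul_fin_two]
    ext i j
    fin_cases i <;> fin_cases j <;> simp [Matrix.one_apply]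
  -- rewrite the third slot
  have h3 : ρ₃ (w * a) (ρ₃ d φ₂) = φ₂ := by
    have : ρ₃ (w * a) (ρ₃ d φ₂) = ρ₃ w (ρ₃ (a * d) φ₂) := by
      simp [map_mul, Module.End.mul_apply, mul_assoc]
    rw [this, hcen₃ (a * d) (ϖ : k) had φ₂, hφ₂]
  -- rewrite the second slot
  have h2 : ρ₂ (w * a) φ₁ = ρ₂ d φ₁ := by
    rw [hwa_dw, map_mul, Module.End.mul_apply, hφ₁]
  calc ℓ φ φ₁ (ρ₃ d φ₂)
      = ℓ (ρ₁ (w * a) φ) (ρ₂ (w * a) φ₁) (ρ₃ (w * a) (ρ₃ d φ₂)) :=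
        (hinv (w * a) φ φ₁ (ρ₃ d φ₂)).symm
    _ = ℓ (η • φ) (ρ₂ d φ₁) φ₂ := by rw [hAL, h2, h3]
    _ = η * ℓ φ (ρ₂ d φ₁) φ₂ := by simp
end

section
/- Let ℓ : V ⊗ V₁ ⊗ V₂ → ℂ be a trilinear functional invariant under a group G, and let T = p^{-1/2} ∫_{H} (translation by h) dh be the Hecke operator given by averaging over a double coset H = K·a(ϖ)·K of measure p+1 (each coset having measure 1), where φ is a T-eigenvector with eigenvalue λ and is K-invariant, and φ₁, φ₂ are K-invariant and center-invariant. Then ((p+1)/p^{1/2})·ℓ(φ, φ₁^{a}, φ₂^{a}) = λ·ℓ(φ, φ₁, φ₂), where φᵃ denotes translation by a(ϖ) = diag(ϖ, 1). -/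
open MeasureTheory

/-- Hecke relation for an invariant trilinear functional:
`T = p^{-1/2}∫_H (translation by h) dh` with `H = K·a·K` of measure `p+1`;
if `φ` is a `T`-eigenvector with eigenvalue `λ`, `φ` is `K`-invariant, and
`φ₁, φ₂` are `K`-invariant and center-invariant, then
`((p+1)/√p)·ℓ(φ, a·φ₁, a·φ₂) = λ·ℓ(φ, φ₁, φ₂)`. -/
theorem stmt_7 {G : Type*} [Group G] [MeasurableSpace G] (μ : Measure G)
    {V₁ V₂ V₃ : Type*}
    [NormedAddCommGroup V₁] [NormedSpace ℂ V₁] [CompleteSpace V₁]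
    [AddCommGroup V₂] [Module ℂ V₂] [AddCommGroup V₃] [Module ℂ V₃]
    (ρ₁ : Representation ℂ G V₁) (ρ₂ : Representation ℂ G V₂)
    (ρ₃ : Representation ℂ G V₃)
    (ℓ : V₁ →ₗ[ℂ] V₂ →ₗ[ℂ] V₃ →ₗ[ℂ] ℂ)
    (hcont : ∀ (v₂ : V₂) (v₃ : V₃), Continuous fun v₁ : V₁ => ℓ v₁ v₂ v₃)
    (hinv : ∀ (g : G) (v₁ : V₁) (v₂ : V₂) (v₃ : V₃),
      ℓ (ρ₁ g v₁) (ρ₂ g v₂) (ρ₃ g v₃) = ℓ v₁ v₂ v₃)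
    (K : Subgroup G) (a : G) (H : Set G)
    (hH : H = {g : G | ∃ k₁ ∈ (K : Set G), ∃ k₂ ∈ (K : Set G), g = k₁ * a * k₂})
    (p : ℝ) (hp : 1 < p) (hμH : μ H = ENNReal.ofReal (p + 1))
    (φ : V₁) (φ₁ : V₂) (φ₂ : V₃)
    (hφK : ∀ g ∈ K, ρ₁ g φ = φ)
    (hφ₁K : ∀ g ∈ K, ρ₂ g φ₁ = φ₁) (hφ₂K : ∀ g ∈ K, ρ₃ g φ₂ = φ₂)
    (hφ₁Z : ∀ z ∈ Subgroup.center G, ρ₂ z φ₁ = φ₁)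
    (hφ₂Z : ∀ z ∈ Subgroup.center G, ρ₃ z φ₂ = φ₂)
    (hconj : ∃ w ∈ K, ∃ z ∈ Subgroup.center G, a⁻¹ = z * w * a * w⁻¹)
    (hIntegrable : IntegrableOn (fun h : G => ρ₁ h φ) H μ)
    (lam : ℂ)
    (hT : ((Real.sqrt p : ℝ) : ℂ)⁻¹ • (∫ h in H, ρ₁ h φ ∂μ) = lam • φ) :
    (((p + 1) / Real.sqrt p : ℝ) : ℂ) * ℓ φ (ρ₂ a φ₁) (ρ₃ a φ₂)
      = lam * ℓ φ φ₁ φ₂ := by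
  classical
  set c : ℂ := ℓ (ρ₁ a φ) φ₁ φ₂ with hc
  -- the continuous linear functional v ↦ ℓ v φ₁ φ₂
  set L : V₁ →L[ℂ] ℂ :=
    { toFun := fun v => ℓ v φ₁ φ₂
      map_add' := fun x y => by simp
      map_smul' := fun r x => by simp
      cont := hcont φ₁ φ₂ } with hL
  have hLapp : ∀ v : V₁, L v = ℓ v φ₁ φ₂ := fun v => rfl
  -- ℓ(ρ₁ h φ) φ₁ φ₂ is constant on H
  have key1 : ∀ h ∈ H, L (ρ₁ h φ) = c := by
    intro h hh
    rw [hH] at hh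
    obtain ⟨k₁, hk₁, k₂, hk₂, rfl⟩ := hh
    have h1 : ρ₁ (k₁ * a * k₂) φ = ρ₁ k₁ (ρ₁ a φ) := by
      simp [map_mul, Module.End.mul_apply, hφK k₂ hk₂]
    rw [hLapp, h1, hc]
    calc ℓ (ρ₁ k₁ (ρ₁ a φ)) φ₁ φ₂
        = ℓ (ρ₁ k₁ (ρ₁ a φ)) (ρ₂ k₁ φ₁) (ρ₃ k₁ φ₂) := by
          rw [hφ₁K k₁ hk₁, hφ₂K k₁ hk₁]
      _ = ℓ (ρ₁ a φ) φ₁ φ₂ := hinv k₁ _ _ _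
  -- hence the integrand is a.e. constant on H
  have haec : (fun h : G => L (ρ₁ h φ)) =ᵐ[μ.restrict H] fun _ => c := by
    obtain ⟨f', hf'sm, hff'⟩ := hIntegrable.aestronglyMeasurable
    have hnull : μ.restrict H {x | ¬ ρ₁ x φ = f' x} = 0 := by
      simpa [Filter.EventuallyEq, ae_iff] using hff'
    obtain ⟨t, hsub, htm, ht0⟩ := exists_measurable_superset_of_null hnull
    have htH : μ (t ∩ H) = 0 := by
      rw [Measure.restrict_apply htm] at ht0; exact ht0
    have hSm : MeasurableSet {x | L (f' x) ≠ c} := by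
      have hsm : StronglyMeasurable fun x => L (f' x) :=
        L.continuous.comp_stronglyMeasurable hf'sm
      exact hsm.measurable (measurableSet_singleton c).compl
    rw [Filter.EventuallyEq, ae_iff]
    have hsubset : {x | ¬ L (ρ₁ x φ) = c} ⊆
        {x | L (f' x) ≠ c} ∪ {x | ¬ ρ₁ x φ = f' x} := by
      intro x hx
      by_cases hfx : ρ₁ x φ = f' x
      · exact Or.inl (by simp only [Set.mem_setOf_eq]; rw [← hfx]; exact hx)
      · exact Or.inr hfx
    refine measure_mono_null hsubset (measure_union_null ?_ hnull)
    rw [Measure.restrict_apply hSm]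
    refine measure_mono_null ?_ htH
    intro x ⟨hx1, hx2⟩
    refine ⟨hsub ?_, hx2⟩
    intro hfx
    exact hx1 (hfx ▸ key1 x hx2)
  -- compute L of the integral
  have hInt : L (∫ h in H, ρ₁ h φ ∂μ) = ((p + 1 : ℝ) : ℂ) * c := by
    rw [← L.integral_comp_comm hIntegrable, integral_congr_ae haec, integral_const,
      measureReal_def, Measure.restrict_apply_univ, hμH, ENNReal.toReal_ofReal (by linarith),
      Complex.real_smul]
  -- apply L to the eigenvector equation
  have hE : ((Real.sqrt p : ℝ) : ℂ)⁻¹ * (((p + 1 : ℝ) : ℂ) * c)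
      = lam * ℓ φ φ₁ φ₂ := by
    have := congrArg L hT
    rw [_root_.map_smul, _root_.map_smul, hInt, smul_eq_mul, smul_eq_mul, hLapp] at this
    exact this
  -- identify ℓ φ (ρ₂ a φ₁) (ρ₃ a φ₂) with c
  have hid : ℓ φ (ρ₂ a φ₁) (ρ₃ a φ₂) = c := by
    obtain ⟨w, hw, z, hz, hza⟩ := hconj
    have step1 : ℓ φ (ρ₂ a φ₁) (ρ₃ a φ₂) = ℓ (ρ₁ a⁻¹ φ) φ₁ φ₂ := by
      have h2 : ρ₂ a⁻¹ (ρ₂ a φ₁) = φ₁ := by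
        rw [← Module.End.mul_apply, ← map_mul, inv_mul_cancel, map_one,
          Module.End.one_apply]
      have h3 : ρ₃ a⁻¹ (ρ₃ a φ₂) = φ₂ := by
        rw [← Module.End.mul_apply, ← map_mul, inv_mul_cancel, map_one,
          Module.End.one_apply]
      calc ℓ φ (ρ₂ a φ₁) (ρ₃ a φ₂)
          = ℓ (ρ₁ a⁻¹ φ) (ρ₂ a⁻¹ (ρ₂ a φ₁)) (ρ₃ a⁻¹ (ρ₃ a φ₂)) :=
            (hinv a⁻¹ φ (ρ₂ a φ₁) (ρ₃ a φ₂)).symm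
        _ = ℓ (ρ₁ a⁻¹ φ) φ₁ φ₂ := by rw [h2, h3]
    have step2 : ρ₁ a⁻¹ φ = ρ₁ (z * w) (ρ₁ a φ) := by
      rw [hza]
      have hw' : ρ₁ w⁻¹ φ = φ := hφK w⁻¹ (K.inv_mem hw)
      simp [map_mul, Module.End.mul_apply, hw']
    have hinvzw : ρ₂ (z * w) φ₁ = φ₁ := by
      simp [map_mul, Module.End.mul_apply, hφ₁K w hw, hφ₁Z z hz]
    have hinvzw' : ρ₃ (z * w) φ₂ = φ₂ := by
      simp [map_mul, Module.End.mul_apply, hφ₂K w hw, hφ₂Z z hz]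
    calc ℓ φ (ρ₂ a φ₁) (ρ₃ a φ₂) = ℓ (ρ₁ a⁻¹ φ) φ₁ φ₂ := step1
      _ = ℓ (ρ₁ (z * w) (ρ₁ a φ)) (ρ₂ (z * w) φ₁) (ρ₃ (z * w) φ₂) := by
          rw [step2, hinvzw, hinvzw']
      _ = c := hinv (z * w) _ _ _
  rw [hid, ← hE]
  have hsp : (Real.sqrt p : ℝ) ≠ 0 :=
    (Real.sqrt_pos.mpr (by linarith)).ne'
  have hspC : ((Real.sqrt p : ℝ) : ℂ) ≠ 0 := by exact_mod_cast hsp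
  push_cast
  field_simp
end
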